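/- With C_{2n} = C_2 + (2n-2)x_j (where C_2 is as in the Maxwell case), the commutator [Δ_x^n, C_{2n}] equals -4n x_j Δ_x^n + 4n⟨u,D_x⟩∂_{u_j}Δ_x^{n-1} - 4n u_j⟨D_u,D_x⟩Δ_x^{n-1}, as operators on smooth functions f(x,u) that are polynomial of degree 1 in u. -/

import Mathlib

noncomputable section
open scoped BigOperators

/-- Functions `f(x,u)` of two vector variables `x, u ∈ ℝ^m`. -/
abbrev Fn (m : ℕ) := ((Fin m → ℝ) × (Fin m → ℝ)) → ℝ

/-- The partial derivative `∂_{x_i}`. -/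
def Dx {m : ℕ} (i : Fin m) (f : Fn m) : Fn m :=
  fun p => fderiv ℝ f p (Pi.single i 1, 0)

/-- The partial derivative `∂_{u_i}`. -/
def Du {m : ℕ} (i : Fin m) (f : Fn m) : Fn m :=
  fun p => fderiv ℝ f p (0, Pi.single i 1)

/-- The Laplacian in `x`: `Δ_x = ∑ᵢ ∂_{x_i}²`. -/
def DeltaX {m : ℕ} (f : Fn m) : Fn m := fun p => ∑ i, Dx i (Dx i f) p

/-- The Euler operator `E_x = ∑ᵢ x_i ∂_{x_i}`. -/
def EulerX {m : ℕ} (f : Fn m) : Fn m := fun p => ∑ i, p.1 i * Dx i f p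

/-- The operator `⟨u, D_x⟩ = ∑ᵢ u_i ∂_{x_i}`. -/
def uDx {m : ℕ} (f : Fn m) : Fn m := fun p => ∑ i, p.2 i * Dx i f p

/-- The operator `⟨x, D_u⟩ = ∑ᵢ x_i ∂_{u_i}`. -/
def xDu {m : ℕ} (f : Fn m) : Fn m := fun p => ∑ i, p.1 i * Du i f p

/-- The operator `⟨D_u, D_x⟩ = ∑ᵢ ∂_{u_i} ∂_{x_i}`. -/
def DuDx {m : ℕ} (f : Fn m) : Fn m := fun p => ∑ i, Du i (Dx i f) p

/-- The special conformal transformation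
`C_{2n} = 2⟨u,x⟩∂_{u_j} - 2u_j⟨x,D_u⟩ + ‖x‖²∂_{x_j} - x_j(2E_x + m - 2n)`
(for `n = 1` this is the Maxwell-case operator `C_2`, and `C_{2n} = C_2 + (2n-2)x_j`). -/
def SCT {m : ℕ} (n : ℕ) (j : Fin m) (f : Fn m) : Fn m :=
  fun p => 2 * (∑ i, p.2 i * p.1 i) * Du j f p - 2 * p.2 j * xDu f p
    + (∑ i, p.1 i ^ 2) * Dx j f p
    - p.1 j * (2 * EulerX f p + ((m : ℝ) - 2 * n) * f p)
namespace Aux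
variable {m : ℕ}
abbrev Pt (m : ℕ) := (Fin m → ℝ) × (Fin m → ℝ)

lemma smooth_D {f : Fn m} (hf : ContDiff ℝ (⊤ : ℕ∞) f) (v : Pt m) :
    ContDiff ℝ (⊤ : ℕ∞) (fun p => fderiv ℝ f p v) :=
  (hf.fderiv_right (by simp)).clm_apply contDiff_const

lemma smooth_Dx {f : Fn m} (hf : ContDiff ℝ (⊤ : ℕ∞) f) (i : Fin m) : ContDiff ℝ (⊤ : ℕ∞) (Dx i f) :=
  smooth_D hf _

lemma smooth_Du {f : Fn m} (hf : ContDiff ℝ (⊤ : ℕ∞) f) (i : Fin m) : ContDiff ℝ (⊤ : ℕ∞) (Du i f) :=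
  smooth_D hf _

lemma smooth_DeltaX {f : Fn m} (hf : ContDiff ℝ (⊤ : ℕ∞) f) : ContDiff ℝ (⊤ : ℕ∞) (DeltaX f) := by
  show ContDiff ℝ (⊤ : ℕ∞) fun p => ∑ i, Dx i (Dx i f) p
  exact ContDiff.sum fun i _ => smooth_Dx (smooth_Dx hf i) i

lemma smooth_iter {f : Fn m} (hf : ContDiff ℝ (⊤ : ℕ∞) f) (a : ℕ) :
    ContDiff ℝ (⊤ : ℕ∞) ((DeltaX (m := m))^[a] f) := by
  induction a generalizing f with
  | zero => exact hf
  | succ a ih =>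
    rw [Function.iterate_succ_apply]
    exact ih (smooth_DeltaX hf)

def clmX (k : Fin m) : Pt m →L[ℝ] ℝ :=
  (ContinuousLinearMap.proj k).comp (ContinuousLinearMap.fst ℝ (Fin m → ℝ) (Fin m → ℝ))
def clmU (k : Fin m) : Pt m →L[ℝ] ℝ :=
  (ContinuousLinearMap.proj k).comp (ContinuousLinearMap.snd ℝ (Fin m → ℝ) (Fin m → ℝ))

lemma smooth_X (k : Fin m) : ContDiff ℝ (⊤ : ℕ∞) (fun p : Pt m => p.1 k) := (clmX k).contDiff
lemma smooth_U (k : Fin m) : ContDiff ℝ (⊤ : ℕ∞) (fun p : Pt m => p.2 k) := (clmU k).contDiff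

lemma diffAt {f : Fn m} (hf : ContDiff ℝ (⊤ : ℕ∞) f) (p : Pt m) : DifferentiableAt ℝ f p :=
  (hf.differentiable (by simp)).differentiableAt

lemma fderiv_X (k : Fin m) (p : Pt m) (v : Pt m) :
    fderiv ℝ (fun p : Pt m => p.1 k) p v = v.1 k := by
  have : fderiv ℝ (fun p : Pt m => p.1 k) p = clmX k := (clmX k).fderiv
  rw [this]; rfl

lemma fderiv_U (k : Fin m) (p : Pt m) (v : Pt m) :
    fderiv ℝ (fun p : Pt m => p.2 k) p v = v.2 k := by
  have : fderiv ℝ (fun p : Pt m => p.2 k) p = clmU k := (clmU k).fderiv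
  rw [this]; rfl

lemma D_mul {g h : Fn m} (hg : ContDiff ℝ (⊤ : ℕ∞) g) (hh : ContDiff ℝ (⊤ : ℕ∞) h) (p v : Pt m) :
    fderiv ℝ (fun q => g q * h q) p v
      = g p * fderiv ℝ h p v + h p * fderiv ℝ g p v := by
  rw [fderiv_fun_mul (diffAt hg p) (diffAt hh p)]
  simp [smul_eq_mul]

lemma D_add {g h : Fn m} (hg : ContDiff ℝ (⊤ : ℕ∞) g) (hh : ContDiff ℝ (⊤ : ℕ∞) h) (p v : Pt m) :
    fderiv ℝ (fun q => g q + h q) p v = fderiv ℝ g p v + fderiv ℝ h p v := by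
  rw [fderiv_fun_add (diffAt hg p) (diffAt hh p)]; rfl

lemma D_const_mul {g : Fn m} (hg : ContDiff ℝ (⊤ : ℕ∞) g) (c : ℝ) (p v : Pt m) :
    fderiv ℝ (fun q => c * g q) p v = c * fderiv ℝ g p v := by
  rw [fderiv_const_mul (diffAt hg p) c]; simp

lemma D_sum {ι : Type*} {s : Finset ι} {F : ι → Fn m}
    (hF : ∀ i ∈ s, ContDiff ℝ (⊤ : ℕ∞) (F i)) (p v : Pt m) :
    fderiv ℝ (fun q => ∑ i ∈ s, F i q) p v = ∑ i ∈ s, fderiv ℝ (F i) p v := by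
  rw [fderiv_fun_sum (fun i hi => diffAt (hF i hi) p)]
  simp

lemma D_comm {f : Fn m} (hf : ContDiff ℝ (⊤ : ℕ∞) f) (v w p : Pt m) :
    fderiv ℝ (fun q => fderiv ℝ f q v) p w = fderiv ℝ (fun q => fderiv ℝ f q w) p v := by
  have hd : ∀ y, HasFDerivAt f (fderiv ℝ f y) y := fun y => (diffAt hf y).hasFDerivAt
  have hf' : DifferentiableAt ℝ (fderiv ℝ f) p :=
    ((hf.fderiv_right (m := (⊤ : ℕ∞)) (by simp)).differentiable (by simp)).differentiableAt
  have key : ∀ u ww : Pt m, fderiv ℝ (fun q => fderiv ℝ f q u) p ww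
      = fderiv ℝ (fderiv ℝ f) p ww u := by
    intro u ww
    have h2 := fderiv_clm_apply (c := fderiv ℝ f) (u := fun _ => u) hf' (differentiableAt_const u)
    have h3 : fderiv ℝ (fun q : Pt m => fderiv ℝ f q u) p ww
        = ((fderiv ℝ f p).comp (fderiv ℝ (fun _ : Pt m => u) p)
            + (fderiv ℝ (fderiv ℝ f) p).flip u) ww := by rw [← h2]
    rw [h3]
    simp [fderiv_fun_const]
  rw [key v w, key w v]
  exact second_derivative_symmetric hd hf'.hasFDerivAt w v

/-! ### Operator-level lemmas -/

lemma Dx_add {g h : Fn m} (hg : ContDiff ℝ (⊤ : ℕ∞) g) (hh : ContDiff ℝ (⊤ : ℕ∞) h) (i : Fin m) :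
    Dx i (fun p => g p + h p) = fun p => Dx i g p + Dx i h p := by
  funext p; simp only [Dx]; exact D_add hg hh p _

lemma Dx_const_mul {g : Fn m} (hg : ContDiff ℝ (⊤ : ℕ∞) g) (c : ℝ) (i : Fin m) :
    Dx i (fun p => c * g p) = fun p => c * Dx i g p := by
  funext p; simp only [Dx]; exact D_const_mul hg c p _

lemma Dx_sum {ι : Type*} {s : Finset ι} {F : ι → Fn m}
    (hF : ∀ i ∈ s, ContDiff ℝ (⊤ : ℕ∞) (F i)) (i : Fin m) :
    Dx i (fun p => ∑ k ∈ s, F k p) = fun p => ∑ k ∈ s, Dx i (F k) p := by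
  funext p; simp only [Dx]; exact D_sum hF p _

lemma Dx_mulX {g : Fn m} (hg : ContDiff ℝ (⊤ : ℕ∞) g) (i k : Fin m) :
    Dx i (fun p => p.1 k * g p)
      = fun p => (if k = i then g p else 0) + p.1 k * Dx i g p := by
  funext p; simp only [Dx]
  have := D_mul (g := fun p : Pt m => p.1 k) (h := g) (smooth_X k) hg p (Pi.single i 1, 0)
  rw [this, fderiv_X]
  simp only [Pi.single_apply]
  split_ifs <;> ring

lemma Dx_mulU {g : Fn m} (hg : ContDiff ℝ (⊤ : ℕ∞) g) (i k : Fin m) :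
    Dx i (fun p => p.2 k * g p) = fun p => p.2 k * Dx i g p := by
  funext p; simp only [Dx]
  have := D_mul (g := fun p : Pt m => p.2 k) (h := g) (smooth_U k) hg p (Pi.single i 1, 0)
  rw [this, fderiv_U]
  simp

lemma Dx_Dx_comm {g : Fn m} (hg : ContDiff ℝ (⊤ : ℕ∞) g) (i k : Fin m) :
    Dx i (Dx k g) = Dx k (Dx i g) := by
  funext p; simp only [Dx]; exact D_comm hg _ _ p

lemma Dx_Du_comm {g : Fn m} (hg : ContDiff ℝ (⊤ : ℕ∞) g) (i k : Fin m) :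
    Dx i (Du k g) = Du k (Dx i g) := by
  funext p; simp only [Dx, Du]; exact D_comm hg _ _ p

lemma smooth_mulX {g : Fn m} (hg : ContDiff ℝ (⊤ : ℕ∞) g) (k : Fin m) :
    ContDiff ℝ (⊤ : ℕ∞) (fun p => p.1 k * g p) := (smooth_X k).mul hg

lemma smooth_mulU {g : Fn m} (hg : ContDiff ℝ (⊤ : ℕ∞) g) (k : Fin m) :
    ContDiff ℝ (⊤ : ℕ∞) (fun p => p.2 k * g p) := (smooth_U k).mul hg

/-! ### DeltaX-level lemmas -/

lemma DeltaX_add {g h : Fn m} (hg : ContDiff ℝ (⊤ : ℕ∞) g) (hh : ContDiff ℝ (⊤ : ℕ∞) h) :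
    DeltaX (fun p => g p + h p) = fun p => DeltaX g p + DeltaX h p := by
  funext p; simp only [DeltaX]
  have : ∀ i : Fin m, Dx i (Dx i (fun p => g p + h p)) p
      = Dx i (Dx i g) p + Dx i (Dx i h) p := by
    intro i
    rw [Dx_add hg hh i, Dx_add (smooth_Dx hg i) (smooth_Dx hh i) i]
  rw [Finset.sum_congr rfl fun i _ => this i, Finset.sum_add_distrib]

lemma DeltaX_const_mul {g : Fn m} (hg : ContDiff ℝ (⊤ : ℕ∞) g) (c : ℝ) :
    DeltaX (fun p => c * g p) = fun p => c * DeltaX g p := by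
  funext p; simp only [DeltaX]
  have : ∀ i : Fin m, Dx i (Dx i (fun p => c * g p)) p = c * Dx i (Dx i g) p := by
    intro i
    rw [Dx_const_mul hg c i, Dx_const_mul (smooth_Dx hg i) c i]
  rw [Finset.sum_congr rfl fun i _ => this i, ← Finset.mul_sum]

lemma DeltaX_sum {ι : Type*} {s : Finset ι} {F : ι → Fn m}
    (hF : ∀ i ∈ s, ContDiff ℝ (⊤ : ℕ∞) (F i)) :
    DeltaX (fun p => ∑ k ∈ s, F k p) = fun p => ∑ k ∈ s, DeltaX (F k) p := by
  funext p; simp only [DeltaX]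
  have : ∀ i : Fin m, Dx i (Dx i (fun p => ∑ k ∈ s, F k p)) p
      = ∑ k ∈ s, Dx i (Dx i (F k)) p := by
    intro i
    rw [Dx_sum hF i, Dx_sum (fun k hk => smooth_Dx (hF k hk) i) i]
  rw [Finset.sum_congr rfl fun i _ => this i, Finset.sum_comm]

lemma DeltaX_Dx {g : Fn m} (hg : ContDiff ℝ (⊤ : ℕ∞) g) (k : Fin m) :
    DeltaX (Dx k g) = Dx k (DeltaX g) := by
  have h1 : ∀ i : Fin m, Dx i (Dx i (Dx k g)) = Dx k (Dx i (Dx i g)) := by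
    intro i
    rw [Dx_Dx_comm hg i k, Dx_Dx_comm (smooth_Dx hg i) i k]
  have h2 : Dx k (DeltaX g) = fun p => ∑ i : Fin m, Dx k (Dx i (Dx i g)) p :=
    Dx_sum (fun i _ => smooth_Dx (smooth_Dx hg i) i) k
  funext p
  simp only [DeltaX, h2]
  exact Finset.sum_congr rfl fun i _ => by rw [h1 i]

lemma DeltaX_Du {g : Fn m} (hg : ContDiff ℝ (⊤ : ℕ∞) g) (k : Fin m) :
    DeltaX (Du k g) = Du k (DeltaX g) := by
  have h1 : ∀ i : Fin m, Dx i (Dx i (Du k g)) = Du k (Dx i (Dx i g)) := by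
    intro i
    rw [Dx_Du_comm hg i k, Dx_Du_comm (smooth_Dx hg i) i k]
  have h2 : Du k (DeltaX g) = fun p => ∑ i : Fin m, Du k (Dx i (Dx i g)) p := by
    funext p; simp only [Du, DeltaX]
    exact D_sum (fun i _ => smooth_Dx (smooth_Dx hg i) i) p _
  funext p
  simp only [DeltaX, h2]
  exact Finset.sum_congr rfl fun i _ => by rw [h1 i]

lemma DeltaX_mulU {g : Fn m} (hg : ContDiff ℝ (⊤ : ℕ∞) g) (k : Fin m) :
    DeltaX (fun p => p.2 k * g p) = fun p => p.2 k * DeltaX g p := by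
  funext p; simp only [DeltaX]
  have : ∀ i : Fin m, Dx i (Dx i (fun p => p.2 k * g p)) p
      = p.2 k * Dx i (Dx i g) p := by
    intro i
    rw [Dx_mulU hg i k, Dx_mulU (smooth_Dx hg i) i k]
  rw [Finset.sum_congr rfl fun i _ => this i, ← Finset.mul_sum]

lemma DeltaX_mulX {g : Fn m} (hg : ContDiff ℝ (⊤ : ℕ∞) g) (k : Fin m) :
    DeltaX (fun p => p.1 k * g p) = fun p => p.1 k * DeltaX g p + 2 * Dx k g p := by
  funext p; simp only [DeltaX]
  have key : ∀ i : Fin m, Dx i (Dx i (fun p => p.1 k * g p)) p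
      = p.1 k * Dx i (Dx i g) p + (if k = i then 2 * Dx k g p else 0) := by
    intro i
    rw [Dx_mulX hg i k]
    by_cases h : k = i
    · subst h
      simp only [eq_self_iff_true, if_true]
      have e1 : (fun p : Pt m => g p + p.1 k * Dx k g p)
          = fun p => g p + (fun q => q.1 k * Dx k g q) p := rfl
      rw [e1, Dx_add hg (smooth_mulX (smooth_Dx hg k) k) k,
        Dx_mulX (smooth_Dx hg k) k k]
      simp only [eq_self_iff_true, if_true]
      ring
    · simp only [if_neg h]
      have e1 : (fun p : Pt m => 0 + p.1 k * Dx i g p)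
          = fun p => p.1 k * Dx i g p := by funext q; ring
      rw [e1, Dx_mulX (smooth_Dx hg i) i k]
      simp only [if_neg h]
      ring
  rw [Finset.sum_congr rfl fun i _ => key i, Finset.sum_add_distrib, ← Finset.mul_sum,
    Finset.sum_ite_eq]
  simp

/-! ### Iterated-Laplacian lemmas -/

lemma iter_add {g h : Fn m} (hg : ContDiff ℝ (⊤ : ℕ∞) g) (hh : ContDiff ℝ (⊤ : ℕ∞) h) (a : ℕ) :
    (DeltaX (m := m))^[a] (fun p => g p + h p)
      = fun p => (DeltaX (m := m))^[a] g p + (DeltaX (m := m))^[a] h p := by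
  induction a generalizing g h with
  | zero => rfl
  | succ a ih =>
    rw [Function.iterate_succ_apply, Function.iterate_succ_apply,
      Function.iterate_succ_apply, DeltaX_add hg hh]
    exact ih (smooth_DeltaX hg) (smooth_DeltaX hh)

lemma iter_const_mul {g : Fn m} (hg : ContDiff ℝ (⊤ : ℕ∞) g) (c : ℝ) (a : ℕ) :
    (DeltaX (m := m))^[a] (fun p => c * g p)
      = fun p => c * (DeltaX (m := m))^[a] g p := by
  induction a generalizing g with
  | zero => rfl
  | succ a ih =>
    rw [Function.iterate_succ_apply, Function.iterate_succ_apply, DeltaX_const_mul hg]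
    exact ih (smooth_DeltaX hg)

lemma iter_sum {ι : Type*} {s : Finset ι} {F : ι → Fn m}
    (hF : ∀ i ∈ s, ContDiff ℝ (⊤ : ℕ∞) (F i)) (a : ℕ) :
    (DeltaX (m := m))^[a] (fun p => ∑ k ∈ s, F k p)
      = fun p => ∑ k ∈ s, (DeltaX (m := m))^[a] (F k) p := by
  induction a generalizing F with
  | zero => rfl
  | succ a ih =>
    rw [Function.iterate_succ_apply, DeltaX_sum hF]
    have := ih (F := fun k => DeltaX (F k)) (fun k hk => smooth_DeltaX (hF k hk))
    rw [this]
    funext p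
    exact Finset.sum_congr rfl fun k _ => by rw [← Function.iterate_succ_apply]

lemma iter_Dx {g : Fn m} (hg : ContDiff ℝ (⊤ : ℕ∞) g) (k : Fin m) (a : ℕ) :
    (DeltaX (m := m))^[a] (Dx k g) = Dx k ((DeltaX (m := m))^[a] g) := by
  induction a generalizing g with
  | zero => rfl
  | succ a ih =>
    rw [Function.iterate_succ_apply, Function.iterate_succ_apply, DeltaX_Dx hg]
    exact ih (smooth_DeltaX hg)

lemma iter_Du {g : Fn m} (hg : ContDiff ℝ (⊤ : ℕ∞) g) (k : Fin m) (a : ℕ) :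
    (DeltaX (m := m))^[a] (Du k g) = Du k ((DeltaX (m := m))^[a] g) := by
  induction a generalizing g with
  | zero => rfl
  | succ a ih =>
    rw [Function.iterate_succ_apply, Function.iterate_succ_apply, DeltaX_Du hg]
    exact ih (smooth_DeltaX hg)

lemma iter_mulU {g : Fn m} (hg : ContDiff ℝ (⊤ : ℕ∞) g) (k : Fin m) (a : ℕ) :
    (DeltaX (m := m))^[a] (fun p => p.2 k * g p)
      = fun p => p.2 k * (DeltaX (m := m))^[a] g p := by
  induction a generalizing g with
  | zero => rfl
  | succ a ih =>
    rw [Function.iterate_succ_apply, DeltaX_mulU hg]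
    rw [ih (smooth_DeltaX hg)]
    funext p
    rw [← Function.iterate_succ_apply]

lemma iter_mulX_succ {g : Fn m} (hg : ContDiff ℝ (⊤ : ℕ∞) g) (k : Fin m) (a : ℕ) :
    (DeltaX (m := m))^[a + 1] (fun p => p.1 k * g p)
      = fun p => p.1 k * (DeltaX (m := m))^[a + 1] g p
          + 2 * ((a : ℝ) + 1) * Dx k ((DeltaX (m := m))^[a] g) p := by
  induction a generalizing g with
  | zero =>
    rw [Function.iterate_succ_apply, Function.iterate_zero_apply, DeltaX_mulX hg]
    funext p
    rw [Function.iterate_succ_apply, Function.iterate_zero_apply,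
      Function.iterate_zero_apply]
    push_cast; ring
  | succ a ih =>
    rw [Function.iterate_succ_apply (f := DeltaX (m := m)) (n := a + 1), DeltaX_mulX hg]
    have hDg : ContDiff ℝ (⊤ : ℕ∞) (DeltaX g) := smooth_DeltaX hg
    have e1 : (fun p => p.1 k * DeltaX g p + 2 * Dx k g p)
        = fun p => (fun q : Pt m => q.1 k * DeltaX g q) p
            + (fun q => 2 * Dx k g q) p := rfl
    rw [e1, iter_add (smooth_mulX hDg k) (contDiff_const.mul (smooth_Dx hg k)),
      ih hDg, iter_const_mul (smooth_Dx hg k) 2, iter_Dx hg k (a+1)]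
    funext p
    rw [← Function.iterate_succ_apply (f := DeltaX (m := m)) (n := a + 1),
      ← Function.iterate_succ_apply (f := DeltaX (m := m)) (n := a)]
    push_cast; ring

lemma iter_mulX {g : Fn m} (hg : ContDiff ℝ (⊤ : ℕ∞) g) (k : Fin m) (a : ℕ) :
    (DeltaX (m := m))^[a] (fun p => p.1 k * g p)
      = fun p => p.1 k * (DeltaX (m := m))^[a] g p
          + 2 * (a : ℝ) * Dx k ((DeltaX (m := m))^[a - 1] g) p := by
  cases a with
  | zero => funext p; simp
  | succ a =>
    rw [iter_mulX_succ hg k a]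
    funext p
    push_cast
    simp only [Nat.add_sub_cancel]

/-- Guarded collapse: `c·k·Dxⱼ(Δ(Δ^[k-1]g)) = c·k·Dxⱼ(Δ^[k]g)`. -/
lemma guardU {g : Fn m} (k : ℕ) (j : Fin m) (p : Pt m) :
    (k : ℝ) * Dx j (DeltaX ((DeltaX (m := m))^[k - 1] g)) p
      = (k : ℝ) * Dx j ((DeltaX (m := m))^[k] g) p := by
  cases k with
  | zero => simp
  | succ b =>
    simp only [Nat.add_sub_cancel]
    rw [← Function.iterate_succ_apply' (DeltaX (m := m)) b g]

/-! ### Composite expansion lemmas -/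

lemma helper1 {g : Fn m} (hg : ContDiff ℝ (⊤ : ℕ∞) g) (c : ℝ) (i : Fin m) (a : ℕ) :
    (DeltaX (m := m))^[a] (fun p => p.1 i * (c * g p))
      = fun p => p.1 i * (c * (DeltaX (m := m))^[a] g p)
          + 2 * (a : ℝ) * (c * Dx i ((DeltaX (m := m))^[a - 1] g) p) := by
  have h1 : ContDiff ℝ (⊤ : ℕ∞) (fun p => c * g p) := contDiff_const.mul hg
  rw [iter_mulX h1 i a, iter_const_mul hg c a, iter_const_mul hg c (a - 1),
    Dx_const_mul (smooth_iter hg (a - 1)) c i]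

lemma famA {g : Fn m} (hg : ContDiff ℝ (⊤ : ℕ∞) g) (k i : Fin m) (c : ℝ) (a : ℕ) :
    (DeltaX (m := m))^[a] (fun p => p.2 k * (p.1 i * (c * g p)))
      = fun p => p.2 k * (p.1 i * (c * (DeltaX (m := m))^[a] g p)
          + 2 * (a : ℝ) * (c * Dx i ((DeltaX (m := m))^[a - 1] g) p)) := by
  have h1 : ContDiff ℝ (⊤ : ℕ∞) (fun p => p.1 i * (c * g p)) :=
    smooth_mulX (contDiff_const.mul hg) i
  rw [iter_mulU h1 k a, helper1 hg c i a]

lemma famD {g : Fn m} (hg : ContDiff ℝ (⊤ : ℕ∞) g) (i jj : Fin m) (c : ℝ) (a : ℕ) :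
    (DeltaX (m := m))^[a] (fun p => p.1 jj * (p.1 i * (c * g p)))
      = fun p => p.1 jj * (p.1 i * (c * (DeltaX (m := m))^[a] g p)
            + 2 * (a : ℝ) * (c * Dx i ((DeltaX (m := m))^[a - 1] g) p))
          + 2 * (a : ℝ) * (((if i = jj then c * (DeltaX (m := m))^[a - 1] g p else 0)
              + p.1 i * (c * Dx jj ((DeltaX (m := m))^[a - 1] g) p))
            + 2 * ((a - 1 : ℕ) : ℝ)
                * (c * Dx jj (Dx i ((DeltaX (m := m))^[a - 1 - 1] g)) p)) := by
  have hin : ContDiff ℝ (⊤ : ℕ∞) (fun p => p.1 i * (c * g p)) :=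
    smooth_mulX (contDiff_const.mul hg) i
  rw [iter_mulX hin jj a, helper1 hg c i a, helper1 hg c i (a - 1)]
  have hA : ContDiff ℝ (⊤ : ℕ∞) (fun p => p.1 i * (c * (DeltaX (m := m))^[a - 1] g p)) :=
    smooth_mulX (contDiff_const.mul (smooth_iter hg (a - 1))) i
  have hB : ContDiff ℝ (⊤ : ℕ∞) (fun p => 2 * ((a - 1 : ℕ) : ℝ)
      * (c * Dx i ((DeltaX (m := m))^[a - 1 - 1] g) p)) :=
    contDiff_const.mul (contDiff_const.mul (smooth_Dx (smooth_iter hg (a - 1 - 1)) i))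
  have e : (fun p => p.1 i * (c * (DeltaX (m := m))^[a - 1] g p)
        + 2 * ((a - 1 : ℕ) : ℝ) * (c * Dx i ((DeltaX (m := m))^[a - 1 - 1] g) p))
      = fun p => (fun q => q.1 i * (c * (DeltaX (m := m))^[a - 1] g q)) p
          + (fun q => 2 * ((a - 1 : ℕ) : ℝ)
              * (c * Dx i ((DeltaX (m := m))^[a - 1 - 1] g) q)) p := rfl
  rw [e, Dx_add hA hB jj,
    Dx_mulX (contDiff_const.mul (smooth_iter hg (a - 1))) jj i,
    Dx_const_mul (smooth_iter hg (a - 1)) c jj,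
    Dx_const_mul (contDiff_const.mul (smooth_Dx (smooth_iter hg (a - 1 - 1)) i)) _ jj,
    Dx_const_mul (smooth_Dx (smooth_iter hg (a - 1 - 1)) i) c jj]

end Aux

/-- The commutator identity
`[Δ_x^n, C_{2n}] = -4n x_j Δ_x^n + 4n⟨u,D_x⟩∂_{u_j}Δ_x^{n-1} - 4n u_j⟨D_u,D_x⟩Δ_x^{n-1}`
on smooth functions `f(x,u)` that are (homogeneous) polynomial of degree 1 in `u`. -/
theorem laplacian_pow_SCT_commutator (m n : ℕ) (hn : 1 ≤ n) (j : Fin m) (f : Fn m)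
    (hf : ContDiff ℝ (⊤ : ℕ∞) f)
    (hdeg1 : ∀ (x : Fin m → ℝ) (c : ℝ) (u : Fin m → ℝ), f (x, c • u) = c * f (x, u)) :
    ∀ p, (DeltaX (m := m))^[n] (SCT n j f) p - SCT n j ((DeltaX (m := m))^[n] f) p
      = -4 * n * p.1 j * (DeltaX (m := m))^[n] f p
        + 4 * n * uDx (Du j ((DeltaX (m := m))^[n-1] f)) p
        - 4 * n * p.2 j * DuDx ((DeltaX (m := m))^[n-1] f) p := by
  intro p
  have hn1 : n - 1 + 1 = n := Nat.succ_pred_eq_of_pos hn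
  have hG : ContDiff ℝ (⊤ : ℕ∞) ((DeltaX (m := m))^[n - 1] f) := Aux.smooth_iter hf _
  have hH : ContDiff ℝ (⊤ : ℕ∞) ((DeltaX (m := m))^[n - 1 - 1] f) := Aux.smooth_iter hf _
  have hGF : DeltaX ((DeltaX (m := m))^[n - 1] f) = (DeltaX (m := m))^[n] f := by
    conv_rhs => rw [← hn1]
    rw [Function.iterate_succ_apply']
  -- decomposition of SCT n j f
  have hS : SCT n j f = fun q => (∑ i, (q.2 i * (q.1 i * (2 * Du j f q))
        + q.2 j * (q.1 i * (-2 * Du i f q))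
        + q.1 i * (q.1 i * (1 * Dx j f q))
        + q.1 j * (q.1 i * (-2 * Dx i f q))))
      + q.1 j * ((2 * (n : ℝ) - m) * f q) := by
    funext q
    simp only [SCT, EulerX, xDu, Finset.sum_add_distrib]
    rw [show (∑ i, q.2 i * (q.1 i * (2 * Du j f q)))
        = (∑ i, q.2 i * q.1 i) * (2 * Du j f q) by
      rw [Finset.sum_mul]; exact Finset.sum_congr rfl fun i _ => by ring]
    rw [show (∑ i, q.2 j * (q.1 i * (-2 * Du i f q)))
        = (-2 * q.2 j) * (∑ i, q.1 i * Du i f q) by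
      rw [Finset.mul_sum]; exact Finset.sum_congr rfl fun i _ => by ring]
    rw [show (∑ i, q.1 i * (q.1 i * (1 * Dx j f q)))
        = (∑ i, q.1 i ^ 2) * Dx j f q by
      rw [Finset.sum_mul]; exact Finset.sum_congr rfl fun i _ => by ring]
    rw [show (∑ i, q.1 j * (q.1 i * (-2 * Dx i f q)))
        = (-2 * q.1 j) * (∑ i, q.1 i * Dx i f q) by
      rw [Finset.mul_sum]; exact Finset.sum_congr rfl fun i _ => by ring]
    ring
  have smT : ∀ i : Fin m, ContDiff ℝ (⊤ : ℕ∞) (fun q : Aux.Pt m =>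
      q.2 i * (q.1 i * (2 * Du j f q))
      + q.2 j * (q.1 i * (-2 * Du i f q))
      + q.1 i * (q.1 i * (1 * Dx j f q))
      + q.1 j * (q.1 i * (-2 * Dx i f q))) := fun i =>
    (((Aux.smooth_mulU (Aux.smooth_mulX (contDiff_const.mul (Aux.smooth_Du hf j)) i) i).add
      (Aux.smooth_mulU (Aux.smooth_mulX (contDiff_const.mul (Aux.smooth_Du hf i)) i) j)).add
      (Aux.smooth_mulX (Aux.smooth_mulX (contDiff_const.mul (Aux.smooth_Dx hf j)) i) i)).add
      (Aux.smooth_mulX (Aux.smooth_mulX (contDiff_const.mul (Aux.smooth_Dx hf i)) i) j)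
  have smSum : ContDiff ℝ (⊤ : ℕ∞) (fun q : Aux.Pt m => ∑ i,
      (q.2 i * (q.1 i * (2 * Du j f q))
      + q.2 j * (q.1 i * (-2 * Du i f q))
      + q.1 i * (q.1 i * (1 * Dx j f q))
      + q.1 j * (q.1 i * (-2 * Dx i f q)))) := ContDiff.sum fun i _ => smT i
  have smT5 : ContDiff ℝ (⊤ : ℕ∞) (fun q : Aux.Pt m => q.1 j * ((2 * (n : ℝ) - m) * f q)) :=
    Aux.smooth_mulX (contDiff_const.mul hf) j
  rw [hS]
  have e0 : (fun q : Aux.Pt m => (∑ i, (q.2 i * (q.1 i * (2 * Du j f q))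
        + q.2 j * (q.1 i * (-2 * Du i f q))
        + q.1 i * (q.1 i * (1 * Dx j f q))
        + q.1 j * (q.1 i * (-2 * Dx i f q))))
      + q.1 j * ((2 * (n : ℝ) - m) * f q))
      = fun q => (fun r : Aux.Pt m => ∑ i, (r.2 i * (r.1 i * (2 * Du j f r))
        + r.2 j * (r.1 i * (-2 * Du i f r))
        + r.1 i * (r.1 i * (1 * Dx j f r))
        + r.1 j * (r.1 i * (-2 * Dx i f r)))) q
        + (fun r : Aux.Pt m => r.1 j * ((2 * (n : ℝ) - m) * f r)) q := rfl
  rw [e0, Aux.iter_add smSum smT5 n]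
  have eSum := Aux.iter_sum (m := m) (s := (Finset.univ : Finset (Fin m)))
      (F := fun i => fun q : Aux.Pt m => q.2 i * (q.1 i * (2 * Du j f q))
        + q.2 j * (q.1 i * (-2 * Du i f q))
        + q.1 i * (q.1 i * (1 * Dx j f q))
        + q.1 j * (q.1 i * (-2 * Dx i f q))) (fun i _ => smT i) n
  rw [eSum, Aux.helper1 hf (2 * (n : ℝ) - m) j n]
  simp only []
  have key : ∀ i : Fin m, (DeltaX (m := m))^[n] (fun q : Aux.Pt m =>
      q.2 i * (q.1 i * (2 * Du j f q))
      + q.2 j * (q.1 i * (-2 * Du i f q))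
      + q.1 i * (q.1 i * (1 * Dx j f q))
      + q.1 j * (q.1 i * (-2 * Dx i f q))) p
      = (p.2 i * p.1 i) * (2 * Du j ((DeltaX (m := m))^[n] f) p)
        + (p.2 i * Dx i (Du j ((DeltaX (m := m))^[n - 1] f)) p) * (4 * (n : ℝ))
        + (p.1 i * Du i ((DeltaX (m := m))^[n] f) p) * (-2 * p.2 j)
        + (Du i (Dx i ((DeltaX (m := m))^[n - 1] f)) p) * (-4 * (n : ℝ) * p.2 j)
        + (p.1 i ^ 2) * Dx j ((DeltaX (m := m))^[n] f) p
        + (p.1 i * Dx i (Dx j ((DeltaX (m := m))^[n - 1] f)) p) * (4 * (n : ℝ))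
        + Dx j ((DeltaX (m := m))^[n - 1] f) p * (2 * (n : ℝ))
        + (Dx i (Dx i (Dx j ((DeltaX (m := m))^[n - 1 - 1] f))) p)
            * (4 * (n : ℝ) * ((n - 1 : ℕ) : ℝ))
        + (p.1 i * Dx i ((DeltaX (m := m))^[n] f) p) * (-2 * p.1 j)
        + (Dx i (Dx i ((DeltaX (m := m))^[n - 1] f)) p) * (-4 * (n : ℝ) * p.1 j)
        + (p.1 i * Dx i (Dx j ((DeltaX (m := m))^[n - 1] f)) p) * (-4 * (n : ℝ))
        + (Dx j (Dx i (Dx i ((DeltaX (m := m))^[n - 1 - 1] f))) p)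
            * (-8 * (n : ℝ) * ((n - 1 : ℕ) : ℝ))
        + (if i = j then 2 * (n : ℝ) * (-2 * Dx i ((DeltaX (m := m))^[n - 1] f) p)
            else 0) := by
    intro i
    have eA : (fun q : Aux.Pt m => q.2 i * (q.1 i * (2 * Du j f q))
        + q.2 j * (q.1 i * (-2 * Du i f q))
        + q.1 i * (q.1 i * (1 * Dx j f q))
        + q.1 j * (q.1 i * (-2 * Dx i f q)))
        = fun q => (fun r : Aux.Pt m => r.2 i * (r.1 i * (2 * Du j f r))
          + r.2 j * (r.1 i * (-2 * Du i f r))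
          + r.1 i * (r.1 i * (1 * Dx j f r))) q
          + (fun r : Aux.Pt m => r.1 j * (r.1 i * (-2 * Dx i f r))) q := rfl
    have eB : (fun r : Aux.Pt m => r.2 i * (r.1 i * (2 * Du j f r))
          + r.2 j * (r.1 i * (-2 * Du i f r))
          + r.1 i * (r.1 i * (1 * Dx j f r)))
        = fun r => (fun s : Aux.Pt m => s.2 i * (s.1 i * (2 * Du j f s))
          + s.2 j * (s.1 i * (-2 * Du i f s))) r
          + (fun s : Aux.Pt m => s.1 i * (s.1 i * (1 * Dx j f s))) r := rfl
    have eC : (fun s : Aux.Pt m => s.2 i * (s.1 i * (2 * Du j f s))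
          + s.2 j * (s.1 i * (-2 * Du i f s)))
        = fun s => (fun t : Aux.Pt m => t.2 i * (t.1 i * (2 * Du j f t))) s
          + (fun t : Aux.Pt m => t.2 j * (t.1 i * (-2 * Du i f t))) s := rfl
    have sm1 : ContDiff ℝ (⊤ : ℕ∞) (fun t : Aux.Pt m => t.2 i * (t.1 i * (2 * Du j f t))) :=
      Aux.smooth_mulU (Aux.smooth_mulX (contDiff_const.mul (Aux.smooth_Du hf j)) i) i
    have sm2 : ContDiff ℝ (⊤ : ℕ∞) (fun t : Aux.Pt m => t.2 j * (t.1 i * (-2 * Du i f t))) :=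
      Aux.smooth_mulU (Aux.smooth_mulX (contDiff_const.mul (Aux.smooth_Du hf i)) i) j
    have sm3 : ContDiff ℝ (⊤ : ℕ∞) (fun t : Aux.Pt m => t.1 i * (t.1 i * (1 * Dx j f t))) :=
      Aux.smooth_mulX (Aux.smooth_mulX (contDiff_const.mul (Aux.smooth_Dx hf j)) i) i
    have sm4 : ContDiff ℝ (⊤ : ℕ∞) (fun t : Aux.Pt m => t.1 j * (t.1 i * (-2 * Dx i f t))) :=
      Aux.smooth_mulX (Aux.smooth_mulX (contDiff_const.mul (Aux.smooth_Dx hf i)) i) j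
    rw [eA, Aux.iter_add ((sm1.add sm2).add sm3) sm4 n, eB,
      Aux.iter_add (sm1.add sm2) sm3 n, eC, Aux.iter_add sm1 sm2 n,
      Aux.famA (Aux.smooth_Du hf j) i i 2 n,
      Aux.famA (Aux.smooth_Du hf i) j i (-2) n,
      Aux.famD (Aux.smooth_Dx hf j) i i 1 n,
      Aux.famD (Aux.smooth_Dx hf i) i j (-2) n,
      Aux.iter_Du hf j n, Aux.iter_Du hf j (n - 1),
      Aux.iter_Du hf i n, Aux.iter_Du hf i (n - 1),
      Aux.iter_Dx hf j n, Aux.iter_Dx hf j (n - 1), Aux.iter_Dx hf j (n - 1 - 1),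
      Aux.iter_Dx hf i n, Aux.iter_Dx hf i (n - 1), Aux.iter_Dx hf i (n - 1 - 1),
      Aux.Dx_Du_comm hG i i, Aux.Dx_Dx_comm hG j i]
    simp only []
    by_cases h : i = j
    · subst h; simp only [eq_self_iff_true, if_true]; ring
    · simp only [eq_self_iff_true, if_true, if_neg h]; ring
  rw [Finset.sum_congr rfl fun i _ => key i]
  simp only [Finset.sum_add_distrib, ← Finset.sum_mul, Finset.sum_ite_eq', Finset.mem_univ,
    if_true, Finset.sum_const, Finset.card_univ, Fintype.card_fin, nsmul_eq_mul]
  have e8 : (∑ i : Fin m, Dx i (Dx i (Dx j ((DeltaX (m := m))^[n - 1 - 1] f))) p)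
      = Dx j (DeltaX ((DeltaX (m := m))^[n - 1 - 1] f)) p := congrFun (Aux.DeltaX_Dx hH j) p
  have e10 : (∑ i : Fin m, Dx i (Dx i ((DeltaX (m := m))^[n - 1] f)) p)
      = (DeltaX (m := m))^[n] f p := congrFun hGF p
  have e11 : (∑ i : Fin m, Dx j (Dx i (Dx i ((DeltaX (m := m))^[n - 1 - 1] f))) p)
      = Dx j (DeltaX ((DeltaX (m := m))^[n - 1 - 1] f)) p :=
    (congrFun (Aux.Dx_sum (fun i _ => Aux.smooth_Dx (Aux.smooth_Dx hH i) i) j) p).symm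
  rw [e8, e10, e11]
  have gU := Aux.guardU (g := f) (m := m) (n - 1) j p
  rw [Nat.cast_sub hn, Nat.cast_one] at gU ⊢
  simp only [SCT, EulerX, xDu, uDx, DuDx]
  linear_combination (-4 * (n : ℝ)) * gU
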